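/- Let μ > 0 and β₀, β₁ ∈ ℝ. Suppose the denominator D(ξ,τ) = 1 − (β₀/(2μ)) ∫_{−∞}^ξ φ₀(y) dy − (β₁/(2μ)) e^{−τ/2} φ₀(ξ) is strictly positive for all ξ ∈ ℝ and all τ in an interval I. Then the diffusive N-wave w_N(ξ,τ) = (β₀ φ₀(ξ) + β₁ e^{−τ/2} φ₁(ξ)) / D(ξ,τ) equals −2μ ∂_ξ log D(ξ,τ) and satisfies the rescaled Burgers equation ∂_τ w_N = μ ∂_ξ² w_N + (1/2) ∂_ξ(ξ w_N) − w_N ∂_ξ w_N for all ξ ∈ ℝ and τ ∈ I. -/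

import Mathlib

/-!
Cole–Hopf. Since `φ₀' = -(ξ / (2μ)) φ₀`, the space derivative of `D` is `-N / (2μ)` with `N` the
numerator of `w_N`, so `w_N = N / D = -2μ ∂_ξ log D`. Moreover `D` solves the linear equation
`∂_τ D = μ ∂_ξ² D + (ξ / 2) ∂_ξ D`, which turns into the identity
`μ ∂_ξ w_N + ξ w_N / 2 - w_N² / 2 = -2μ ∂_τ log D`. Differentiating it in `ξ` shows that the right
side of the Burgers equation is `∂_ξ (-2μ ∂_τ log D)`, while the left side is
`∂_τ (-2μ ∂_ξ log D)`; the two mixed derivatives of `log D` agree.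
-/

open MeasureTheory

/-- The Gaussian `φ₀(ξ) = (4πμ)^{−1/2} e^{−ξ²/(4μ)}`. -/
noncomputable def phi0 (μ ξ : ℝ) : ℝ :=
  (Real.sqrt (4 * Real.pi * μ))⁻¹ * Real.exp (-ξ ^ 2 / (4 * μ))

/-- The denominator of the diffusive N-wave:
`D(ξ,τ) = 1 − (β₀/(2μ)) ∫_{−∞}^ξ φ₀ − (β₁/(2μ)) e^{−τ/2} φ₀(ξ)`. -/
noncomputable def Dden (μ β₀ β₁ ξ τ : ℝ) : ℝ :=
  1 - β₀ / (2 * μ) * (∫ y in Set.Iio ξ, phi0 μ y) - β₁ / (2 * μ) * Real.exp (-τ / 2) * phi0 μ ξ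

/-- The diffusive N-wave `w_N(ξ,τ) = (β₀ φ₀(ξ) + β₁ e^{−τ/2} φ₁(ξ)) / D(ξ,τ)`, `φ₁ = φ₀'`. -/
noncomputable def wN (μ β₀ β₁ ξ τ : ℝ) : ℝ :=
  (β₀ * phi0 μ ξ + β₁ * Real.exp (-τ / 2) * deriv (phi0 μ) ξ) / Dden μ β₀ β₁ ξ τ

theorem hasDerivAt_integral_Iio {E : Type*} [NormedAddCommGroup E] [NormedSpace ℝ E]
    [CompleteSpace E] {f : ℝ → E} {x : ℝ} (hf : Integrable f) (hx : ContinuousAt f x) :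
    HasDerivAt (fun u => ∫ y in Set.Iio u, f y) (f x) x := by
  have h : (fun u => ∫ y in Set.Iio u, f y) =
      fun u => (∫ y in Set.Iic 0, f y) + ∫ y in (0 : ℝ)..u, f y := by
    funext u
    rw [← integral_Iic_eq_integral_Iio,
      ← intervalIntegral.integral_Iic_sub_Iic hf.integrableOn hf.integrableOn]
    abel
  rw [h]
  exact (intervalIntegral.integral_hasDerivAt_right hf.intervalIntegrable
    hf.aestronglyMeasurable.stronglyMeasurableAtFilter hx).const_add _

theorem burgers_rhs_eq_deriv_flux {μ : ℝ} (hμ : μ ≠ 0) {w F : ℝ → ℝ} {ξ F' : ℝ}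
    (hw : ∀ x, HasDerivAt w ((F x + w x ^ 2 / 2 - x / 2 * w x) / μ) x)
    (hF : HasDerivAt F F' ξ) :
    μ * deriv (deriv w) ξ + 1 / 2 * deriv (fun x => x * w x) ξ - w ξ * deriv w ξ = F' := by
  have hdw : deriv w = fun x => (F x + w x ^ 2 / 2 - x / 2 * w x) / μ :=
    funext fun x => (hw x).deriv
  have hdflux := ((hF.fun_add (((hw ξ).fun_pow 2).div_const 2)).fun_sub
    (((hasDerivAt_id' ξ).div_const 2).fun_mul (hw ξ))).div_const μ
  rw [hdw, hdflux.deriv, ((hasDerivAt_id' ξ).fun_mul (hw ξ)).deriv]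
  field_simp
  ring

theorem hasDerivAt_exp_neg_half (τ : ℝ) :
    HasDerivAt (fun s => Real.exp (-s / 2)) (-Real.exp (-τ / 2) / 2) τ :=
  ((hasDerivAt_id' τ).fun_neg.div_const 2).exp.congr_deriv (by ring)

theorem hasDerivAt_phi0 (μ x : ℝ) : HasDerivAt (phi0 μ) (-(x / (2 * μ)) * phi0 μ x) x := by
  have h := (((hasDerivAt_pow 2 x).fun_neg.div_const (4 * μ)).exp).const_mul
    (Real.sqrt (4 * Real.pi * μ))⁻¹
  refine h.congr_deriv ?_
  rw [phi0]
  push_cast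
  ring

theorem deriv_phi0_apply (μ x : ℝ) : deriv (phi0 μ) x = -(x / (2 * μ)) * phi0 μ x :=
  (hasDerivAt_phi0 μ x).deriv

theorem hasDerivAt_deriv_phi0 (μ x : ℝ) :
    HasDerivAt (deriv (phi0 μ)) (-(phi0 μ x + x * deriv (phi0 μ) x) / (2 * μ)) x := by
  rw [funext (deriv_phi0_apply μ)]
  exact (((hasDerivAt_id' x).div_const (2 * μ)).fun_neg.fun_mul (hasDerivAt_phi0 μ x)).congr_deriv
    (by beta_reduce; ring)

theorem continuous_phi0 (μ : ℝ) : Continuous (phi0 μ) := by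
  unfold phi0
  fun_prop

theorem integrable_phi0 {μ : ℝ} (hμ : 0 < μ) : Integrable (phi0 μ) := by
  have h := (integrable_exp_neg_mul_sq (inv_pos.2 (mul_pos four_pos hμ))).const_mul
    (Real.sqrt (4 * Real.pi * μ))⁻¹
  refine h.congr (Filter.Eventually.of_forall fun x => ?_)
  rw [phi0]
  ring_nf

noncomputable def wNNumerator (μ β₀ β₁ ξ τ : ℝ) : ℝ :=
  β₀ * phi0 μ ξ + β₁ * Real.exp (-τ / 2) * deriv (phi0 μ) ξ

/-- `-2μ ∂_τ log D`, which is also `μ ∂_ξ w_N + ξ w_N / 2 - w_N² / 2`. -/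
noncomputable def wNFlux (μ β₀ β₁ ξ τ : ℝ) : ℝ :=
  -(β₁ * Real.exp (-τ / 2) * phi0 μ ξ) / (2 * Dden μ β₀ β₁ ξ τ)

section NWave

variable {μ : ℝ} (β₀ β₁ : ℝ) {ξ τ : ℝ}

theorem wN_eq_div : wN μ β₀ β₁ ξ τ = wNNumerator μ β₀ β₁ ξ τ / Dden μ β₀ β₁ ξ τ := rfl

theorem hasDerivAt_Dden (hμ : 0 < μ) :
    HasDerivAt (fun x => Dden μ β₀ β₁ x τ) (-wNNumerator μ β₀ β₁ ξ τ / (2 * μ)) ξ := by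
  have h := (((hasDerivAt_integral_Iio (integrable_phi0 hμ)
    (continuous_phi0 μ).continuousAt).const_mul (β₀ / (2 * μ))).const_sub 1).fun_sub
    ((hasDerivAt_phi0 μ ξ).const_mul (β₁ / (2 * μ) * Real.exp (-τ / 2)))
  exact h.congr_deriv (by rw [wNNumerator, deriv_phi0_apply]; ring)

theorem hasDerivAt_Dden_time :
    HasDerivAt (Dden μ β₀ β₁ ξ) (β₁ * Real.exp (-τ / 2) * phi0 μ ξ / (4 * μ)) τ :=
  ((((hasDerivAt_exp_neg_half τ).const_mul (β₁ / (2 * μ))).mul_const (phi0 μ ξ)).const_sub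
    (1 - β₀ / (2 * μ) * ∫ y in Set.Iio ξ, phi0 μ y)).congr_deriv (by ring)

theorem hasDerivAt_wNNumerator :
    HasDerivAt (fun x => wNNumerator μ β₀ β₁ x τ)
      (-(ξ * wNNumerator μ β₀ β₁ ξ τ + β₁ * Real.exp (-τ / 2) * phi0 μ ξ) / (2 * μ)) ξ :=
  (((hasDerivAt_phi0 μ ξ).const_mul β₀).fun_add
    ((hasDerivAt_deriv_phi0 μ ξ).const_mul (β₁ * Real.exp (-τ / 2)))).congr_deriv
    (by rw [wNNumerator]; ring)

theorem hasDerivAt_wNNumerator_time :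
    HasDerivAt (wNNumerator μ β₀ β₁ ξ) (-(β₁ * Real.exp (-τ / 2) * deriv (phi0 μ) ξ) / 2) τ :=
  ((((hasDerivAt_exp_neg_half τ).const_mul β₁).mul_const (deriv (phi0 μ) ξ)).const_add
    (β₀ * phi0 μ ξ)).congr_deriv (by ring)

theorem wN_eq_neg_mul_deriv_log (hμ : 0 < μ) (hD : Dden μ β₀ β₁ ξ τ ≠ 0) :
    wN μ β₀ β₁ ξ τ = -(2 * μ) * deriv (fun x => Real.log (Dden μ β₀ β₁ x τ)) ξ := by
  rw [((hasDerivAt_Dden β₀ β₁ hμ).log hD).deriv, wN_eq_div]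
  field_simp

theorem hasDerivAt_wN (hμ : 0 < μ) (hD : Dden μ β₀ β₁ ξ τ ≠ 0) :
    HasDerivAt (fun x => wN μ β₀ β₁ x τ)
      ((wNFlux μ β₀ β₁ ξ τ + wN μ β₀ β₁ ξ τ ^ 2 / 2 - ξ / 2 * wN μ β₀ β₁ ξ τ) / μ) ξ :=
  ((hasDerivAt_wNNumerator β₀ β₁).div (hasDerivAt_Dden β₀ β₁ hμ) hD).congr_deriv (by
    rw [wNFlux, wN_eq_div]
    field_simp
    ring)

theorem hasDerivAt_wNFlux (hμ : 0 < μ) (hD : Dden μ β₀ β₁ ξ τ ≠ 0) :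
    HasDerivAt (fun x => wNFlux μ β₀ β₁ x τ)
      (-(β₁ * Real.exp (-τ / 2)) * (deriv (phi0 μ) ξ * Dden μ β₀ β₁ ξ τ
        + phi0 μ ξ * wNNumerator μ β₀ β₁ ξ τ / (2 * μ)) / (2 * Dden μ β₀ β₁ ξ τ ^ 2)) ξ :=
  (((hasDerivAt_phi0 μ ξ).const_mul (β₁ * Real.exp (-τ / 2))).fun_neg.div
    ((hasDerivAt_Dden β₀ β₁ hμ).const_mul 2) (mul_ne_zero two_ne_zero hD)).congr_deriv (by
    rw [deriv_phi0_apply]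
    field_simp
    ring)

theorem hasDerivAt_wN_time (hD : Dden μ β₀ β₁ ξ τ ≠ 0) :
    HasDerivAt (wN μ β₀ β₁ ξ)
      (-(β₁ * Real.exp (-τ / 2)) * (deriv (phi0 μ) ξ * Dden μ β₀ β₁ ξ τ
        + phi0 μ ξ * wNNumerator μ β₀ β₁ ξ τ / (2 * μ)) / (2 * Dden μ β₀ β₁ ξ τ ^ 2)) τ :=
  ((hasDerivAt_wNNumerator_time β₀ β₁).div (hasDerivAt_Dden_time β₀ β₁) hD).congr_deriv (by
    field_simp
    ring)

end NWave

theorem stmt9_general (μ β₀ β₁ : ℝ) (hμ : 0 < μ) (I : Set ℝ)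
    (hpos : ∀ ξ : ℝ, ∀ τ ∈ I, 0 < Dden μ β₀ β₁ ξ τ) :
    (∀ ξ : ℝ, ∀ τ ∈ I,
      wN μ β₀ β₁ ξ τ = -(2 * μ) * deriv (fun x => Real.log (Dden μ β₀ β₁ x τ)) ξ) ∧
    ∀ ξ : ℝ, ∀ τ ∈ I,
      deriv (fun s => wN μ β₀ β₁ ξ s) τ =
        μ * deriv (deriv (fun x => wN μ β₀ β₁ x τ)) ξ
          + 1 / 2 * deriv (fun x => x * wN μ β₀ β₁ x τ) ξ
          - wN μ β₀ β₁ ξ τ * deriv (fun x => wN μ β₀ β₁ x τ) ξ := by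
  have hD : ∀ ξ, ∀ τ ∈ I, Dden μ β₀ β₁ ξ τ ≠ 0 := fun ξ τ hτ => (hpos ξ τ hτ).ne'
  refine ⟨fun ξ τ hτ => wN_eq_neg_mul_deriv_log β₀ β₁ hμ (hD ξ τ hτ), fun ξ τ hτ => ?_⟩
  rw [(hasDerivAt_wN_time β₀ β₁ (hD ξ τ hτ)).deriv]
  exact (burgers_rhs_eq_deriv_flux hμ.ne' (fun x => hasDerivAt_wN β₀ β₁ hμ (hD x τ hτ))
    (hasDerivAt_wNFlux β₀ β₁ hμ (hD ξ τ hτ))).symm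

/-- if the denominator `D` is strictly positive for all `ξ ∈ ℝ` and all `τ`
in an interval `I`, then the diffusive N-wave equals `−2μ ∂_ξ log D` and satisfies the
rescaled Burgers equation `∂_τ w_N = μ ∂_ξ² w_N + (1/2) ∂_ξ(ξ w_N) − w_N ∂_ξ w_N`
for all `ξ ∈ ℝ`, `τ ∈ I`. -/
theorem stmt9 (μ β₀ β₁ : ℝ) (hμ : 0 < μ) (I : Set ℝ) (hI : I.OrdConnected)
    (hpos : ∀ ξ : ℝ, ∀ τ ∈ I, 0 < Dden μ β₀ β₁ ξ τ) :
    (∀ ξ : ℝ, ∀ τ ∈ I,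
      wN μ β₀ β₁ ξ τ = -(2 * μ) * deriv (fun x => Real.log (Dden μ β₀ β₁ x τ)) ξ) ∧
    ∀ ξ : ℝ, ∀ τ ∈ I,
      deriv (fun s => wN μ β₀ β₁ ξ s) τ =
        μ * deriv (deriv (fun x => wN μ β₀ β₁ x τ)) ξ
          + 1 / 2 * deriv (fun x => x * wN μ β₀ β₁ x τ) ξ
          - wN μ β₀ β₁ ξ τ * deriv (fun x => wN μ β₀ β₁ x τ) ξ :=
  stmt9_general μ β₀ β₁ hμ I hpos
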